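/- arXiv:1911.09380 — 4 statements merged into one kernel-verified Lean document; each statement's English description precedes it below -/
import Mathlib

section
/- Let E1, C1, E2, C2, ω1, ω2, A, λ be real numbers with E1, E2, ω1, ω2 > 0, and set δ1 = C1/E1, δ2 = C2/E2, δ = δ1·δ2 and K_ω = (E2·ω1 + C1·ω2)/(E1·E2). Define the local maps Φ1(x,y) = (y^{δ1}, x − (ω1/E1)·ln y) (for y > 0) and Φ2(r,φ) = (φ − (ω2/E2)·ln r, r^{δ2}) (for r > 0), and the global transition Ψ(x,y) = (x, y + A + λ·sin x). Then for every (x,y) ∈ ℝ² with w := y + A + λ·sin x > 0, the composition Φ2 ∘ Φ1 ∘ Ψ satisfies (Φ2 ∘ Φ1 ∘ Ψ)(x,y) = (x − K_ω·ln w, w^δ). -/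
open Real

/-- Theorem A (composition identity): composing the local maps near the two
saddle-foci with the global transition map gives the model first return map. -/
theorem stmt_0 (E₁ C₁ E₂ C₂ ω₁ ω₂ A lam : ℝ)
    (hE₁ : 0 < E₁) (hE₂ : 0 < E₂) (hω₁ : 0 < ω₁) (hω₂ : 0 < ω₂)
    (Φ₁ Φ₂ Ψ : ℝ × ℝ → ℝ × ℝ)
    (hΦ₁ : ∀ x y : ℝ, 0 < y →
      Φ₁ (x, y) = (y ^ (C₁ / E₁), x - (ω₁ / E₁) * Real.log y))
    (hΦ₂ : ∀ r φ : ℝ, 0 < r →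
      Φ₂ (r, φ) = (φ - (ω₂ / E₂) * Real.log r, r ^ (C₂ / E₂)))
    (hΨ : ∀ x y : ℝ, Ψ (x, y) = (x, y + A + lam * Real.sin x))
    (x y : ℝ) (hw : 0 < y + A + lam * Real.sin x) :
    (Φ₂ ∘ Φ₁ ∘ Ψ) (x, y) =
      (x - ((E₂ * ω₁ + C₁ * ω₂) / (E₁ * E₂)) * Real.log (y + A + lam * Real.sin x),
       (y + A + lam * Real.sin x) ^ ((C₁ / E₁) * (C₂ / E₂))) := by
  set w := y + A + lam * Real.sin x with hwdef
  have h1 : Ψ (x, y) = (x, w) := hΨ x y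
  have h2 : Φ₁ (x, w) = (w ^ (C₁ / E₁), x - (ω₁ / E₁) * Real.log w) := hΦ₁ x w hw
  have hr : 0 < w ^ (C₁ / E₁) := Real.rpow_pos_of_pos hw _
  simp only [Function.comp_apply, h1, h2, hΦ₂ _ _ hr]
  rw [Real.log_rpow hw, ← Real.rpow_mul hw.le]
  refine Prod.ext ?_ rfl
  show x - ω₁ / E₁ * Real.log w - ω₂ / E₂ * (C₁ / E₁ * Real.log w) = _
  field_simp
  ring
end

section
/- For every real δ > 1 there exists A₀ ∈ (0,1) such that for all A ∈ (0, A₀), all λ ∈ [0, A), all x ∈ ℝ and all y with A^δ·(1 − λ/A)^δ ≤ y ≤ 2·A^δ·(1 + λ/A)^δ, one has A^δ·(1 − λ/A)^δ < (y + A + λ·sin x)^δ < 2·A^δ·(1 + λ/A)^δ. -/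
open Real

/-- Lemma 7.1: for `A` small enough, the model first return map sends the
annulus `B` into its interior. -/
theorem stmt_2 (δ : ℝ) (hδ : 1 < δ) :
    ∃ A₀ ∈ Set.Ioo (0 : ℝ) 1, ∀ A ∈ Set.Ioo (0 : ℝ) A₀, ∀ lam : ℝ,
      0 ≤ lam → lam < A → ∀ x y : ℝ,
        A ^ δ * (1 - lam / A) ^ δ ≤ y → y ≤ 2 * A ^ δ * (1 + lam / A) ^ δ →
          A ^ δ * (1 - lam / A) ^ δ < (y + A + lam * Real.sin x) ^ δ ∧
            (y + A + lam * Real.sin x) ^ δ < 2 * A ^ δ * (1 + lam / A) ^ δ := by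
  have hδ0 : (0:ℝ) < δ := lt_trans one_pos hδ
  have hδ1 : (0:ℝ) < δ - 1 := by linarith
  have h2 : (1:ℝ) < (2:ℝ) ^ (1/δ) := by
    rw [Real.one_lt_rpow_iff_of_pos (by norm_num)]
    exact Or.inl ⟨by norm_num, by positivity⟩
  set c : ℝ := ((2:ℝ) ^ (1/δ) - 1) / 2 with hc_def
  have hc : 0 < c := div_pos (by linarith) two_pos
  set A₀ : ℝ := min (1/2) (c ^ (1/(δ-1)) / 2) with hA₀_def
  have hA₀pos : 0 < A₀ := lt_min (by norm_num) (by positivity)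
  have hA₀1 : A₀ < 1 := lt_of_le_of_lt (min_le_left _ _) (by norm_num)
  refine ⟨A₀, ⟨hA₀pos, hA₀1⟩, ?_⟩
  rintro A ⟨hA0, hAA₀⟩ lam hlam0 hlamA x y hy1 hy2
  have hAne : A ≠ 0 := ne_of_gt hA0
  have hAlam : 0 < A - lam := sub_pos.mpr hlamA
  have hsub : A ^ δ * (1 - lam / A) ^ δ = (A - lam) ^ δ := by
    rw [← Real.mul_rpow hA0.le (by
      have : lam / A < 1 := (div_lt_one hA0).mpr hlamA
      linarith)]
    congr 1
    field_simp
  have hadd : A ^ δ * (1 + lam / A) ^ δ = (A + lam) ^ δ := by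
    rw [← Real.mul_rpow hA0.le (by positivity)]
    congr 1
    field_simp
  rw [hsub] at hy1 ⊢
  rw [mul_assoc, hadd] at hy2 ⊢
  set t : ℝ := A + lam with ht_def
  have ht : 0 < t := by positivity
  have ht2 : t < 2 * A₀ := by
    have : t < 2 * A := by simp [ht_def]; linarith
    linarith
  have hcle : 2 * A₀ ≤ c ^ (1/(δ-1)) := by
    have := min_le_right (1/2 : ℝ) (c ^ (1/(δ-1)) / 2)
    rw [← hA₀_def] at this
    linarith
  have htc : t ^ (δ - 1) < c := by
    have h1 : t ^ (δ-1) < (c ^ (1/(δ-1))) ^ (δ-1) :=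
      Real.rpow_lt_rpow ht.le (lt_of_lt_of_le ht2 hcle) hδ1
    rwa [← Real.rpow_mul hc.le, one_div_mul_cancel (ne_of_gt hδ1), Real.rpow_one] at h1
  have hsin1 : Real.sin x ≤ 1 := Real.sin_le_one x
  have hsin2 : -1 ≤ Real.sin x := Real.neg_one_le_sin x
  have hls1 : lam * Real.sin x ≤ lam := by nlinarith
  have hls2 : -lam ≤ lam * Real.sin x := by nlinarith
  set w : ℝ := y + A + lam * Real.sin x with hw_def
  have hLpos : 0 < (A - lam) ^ δ := Real.rpow_pos_of_pos hAlam δ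
  have hwlow : A - lam < w := by
    have : (A - lam) ^ δ + (A - lam) ≤ w := by
      simp only [hw_def]; linarith
    linarith
  have hw0 : 0 < w := lt_trans hAlam hwlow
  constructor
  · exact Real.rpow_lt_rpow hAlam.le hwlow hδ0
  · have htδ : t ^ (δ - 1) * t = t ^ δ := by
      rw [← Real.rpow_add_one (ne_of_gt ht) (δ-1), sub_add_cancel]
    have hwle : w ≤ 2 * t ^ δ + t := by
      simp only [hw_def, ht_def]; linarith
    have hkey : 2 * t ^ δ + t < (2:ℝ) ^ (1/δ) * t := by
      have h1 : 2 * t ^ δ + t = (2 * t ^ (δ-1) + 1) * t := by rw [← htδ]; ring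
      have h2 : (2:ℝ) ^ (1/δ) = 2 * c + 1 := by rw [hc_def]; ring
      rw [h1, h2]
      exact mul_lt_mul_of_pos_right (by linarith) ht
    have hwlt : w < (2:ℝ) ^ (1/δ) * t := lt_of_le_of_lt hwle hkey
    have h3 : w ^ δ < ((2:ℝ) ^ (1/δ) * t) ^ δ :=
      Real.rpow_lt_rpow hw0.le hwlt hδ0
    have h4 : ((2:ℝ) ^ (1/δ) * t) ^ δ = 2 * t ^ δ := by
      rw [Real.mul_rpow (by positivity) ht.le, ← Real.rpow_mul (by norm_num),
        one_div_mul_cancel (ne_of_gt hδ0), Real.rpow_one]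
    rwa [h4] at h3
end

section
/- Let K > 0 be real and set f(K) = (exp(4π/K) − 1)/(exp(4π/K) − 1/4). Then there exists A₀ ∈ (0,1) such that for all A ∈ (0, A₀) and all λ with f(K)·A < λ < A, the map F̄ induced on (ℝ/2πℤ) × ℝ by F(x,y) = (x − K·ln(y + A + λ·sin x), (y + A + λ·sin x)^δ) admits a nonempty compact invariant set Λ ⊂ (ℝ/2πℤ) × [0, A] (contained in the region where y + A + λ·sin x > 0, with F̄(Λ) = Λ) together with a homeomorphism h from Λ onto the space {0,1}^ℤ of two-sided binary sequences (with the product topology) satisfying h ∘ F̄ = σ ∘ h on Λ, where σ is the left shift. That is, F̄ restricted to Λ is topologically conjugate to the full Bernoulli shift on two symbols. -/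
/-!
In the coordinates `y = A Y`, with `r = λ / A`, the return map becomes the skew map
`(θ, Y) ↦ (g (θ, Y) mod 2π, q (θ, Y))` with `g = θ - K log A - K log w`,
`q = A^(δ-1) w^δ` and `w = 1 + r sin θ + Y`. On the arc `[π/2 + ρ, 3π/2 - ρ]`, where `sin`
decreases, `∂g/∂θ ≥ 1 + m > 1`, while `q` is `O(A^(δ-1))`-Lipschitz and maps `[0, 3^δ A^(δ-1)]`
into itself. The hypothesis `λ / A > f(K)` makes `g (·, 0)` climb by more than `4π` plus the
length of the arc, so two windows of the arc are each stretched across the whole arc modulo `2π`.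
These are the Conley–Moser conditions: for every itinerary `s ∈ {0,1}^ℤ` the orbit visiting
the windows in the order `s` is the limit of an iteration contracting in a sup metric (pulling
`θ` back and pushing `Y` forward); it depends continuously on `s`, and it determines `s` because
`g` recovers the lift of `θ` and `q` the value of `w`. A continuous injection of the compact
space `{0,1}^ℤ` into the cylinder is a homeomorphism onto its image, which is the invariant set.
-/

open Real Set Filter Topology Function

lemma abs_fst_sub_le_dist (p p' : ℝ × ℝ) : |p.1 - p'.1| ≤ dist p p' :=
  (Real.dist_eq _ _).symm.trans_le (le_max_left _ _)

lemma abs_snd_sub_le_dist (p p' : ℝ × ℝ) : |p.2 - p'.2| ≤ dist p p' :=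
  (Real.dist_eq _ _).symm.trans_le (le_max_right _ _)

lemma le_pow_mul_of_le_mul_max {d : ℤ → ℝ} {γ R : ℝ} (hγ : 0 ≤ γ) (hR : ∀ n, d n ≤ R) {N : ℕ}
    (hd : ∀ n : ℤ, n.natAbs ≤ N → d n ≤ γ * max (d (n - 1)) (d (n + 1))) :
    ∀ k : ℕ, ∀ n : ℤ, n.natAbs + k ≤ N + 1 → d n ≤ γ ^ k * R := by
  intro k
  induction k with
  | zero => simpa using fun n _ => hR n
  | succ k ih =>
    intro n hn
    calc d n ≤ γ * max (d (n - 1)) (d (n + 1)) := hd n (by omega)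
      _ ≤ γ * (γ ^ k * R) := by gcongr; exact max_le (ih _ (by omega)) (ih _ (by omega))
      _ = γ ^ (k + 1) * R := by ring

lemma coe_add_two_pi_mul_int (x : ℝ) (m : ℤ) :
    ((x + 2 * π * m : ℝ) : AddCircle (2 * π)) = x := by
  rw [AddCircle.coe_add, mul_comm (2 * π), ← zsmul_eq_mul, AddCircle.coe_zsmul,
    AddCircle.coe_period, smul_zero, add_zero]

lemma abs_log_sub_log_le {x y c : ℝ} (hc : 0 < c) (hx : c ≤ x) (hy : c ≤ y) :
    |log x - log y| ≤ |x - y| / c := by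
  wlog hxy : y ≤ x generalizing x y
  · rw [abs_sub_comm, abs_sub_comm x]; exact this hy hx (le_of_not_ge hxy)
  have hy0 : 0 < y := hc.trans_le hy
  rw [abs_of_nonneg (sub_nonneg.2 (log_le_log hy0 hxy)), abs_of_nonneg (sub_nonneg.2 hxy),
    ← log_div (hy0.trans_le hxy).ne' hy0.ne']
  calc log (x / y) ≤ x / y - 1 := log_le_sub_one_of_pos (div_pos (hy0.trans_le hxy) hy0)
    _ = (x - y) / y := by field_simp
    _ ≤ (x - y) / c := div_le_div_of_nonneg_left (sub_nonneg.2 hxy) hc hy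

lemma abs_rpow_sub_rpow_le {d M x y : ℝ} (hd : 1 ≤ d) (hx : x ∈ Icc 0 M) (hy : y ∈ Icc 0 M) :
    |x ^ d - y ^ d| ≤ d * M ^ (d - 1) * |x - y| := by
  have hderiv (z : ℝ) (_ : z ∈ Icc 0 M) :
      HasDerivWithinAt (fun z : ℝ => z ^ d) (d * z ^ (d - 1)) (Icc 0 M) z :=
    (hasDerivAt_rpow_const (Or.inr hd)).hasDerivWithinAt
  have hbound (z : ℝ) (hz : z ∈ Icc 0 M) : ‖d * z ^ (d - 1)‖ ≤ d * M ^ (d - 1) := by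
    rw [Real.norm_eq_abs, abs_of_nonneg (by have := hz.1; positivity)]
    exact mul_le_mul_of_nonneg_left (rpow_le_rpow hz.1 hz.2 (by linarith)) (by linarith)
  simpa only [Real.norm_eq_abs] using
    (convex_Icc 0 M).norm_image_sub_le_of_norm_hasDerivWithin_le hderiv hbound hy hx

lemma exists_windows_of_climb {G : ℝ → ℝ} {lo hi τ : ℝ} (hτ : 0 ≤ τ) (hlohi : lo ≤ hi)
    (hG : ContinuousOn G (Icc lo hi)) (hclimb : G lo + (hi - lo) + 4 * π + τ ≤ G hi) :
    ∃ (a b : Bool → ℝ) (j : Bool → ℤ), Injective j ∧ (∀ i, lo ≤ a i ∧ a i ≤ b i ∧ b i ≤ hi) ∧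
      ∀ i, G (a i) = lo + 2 * π * j i ∧ G (b i) = hi + 2 * π * j i + τ := by
  set j₀ := ⌈(G lo - lo) / (2 * π)⌉
  have hj₀ : G lo - lo ≤ 2 * π * j₀ ∧ 2 * π * j₀ < G lo - lo + 2 * π := by
    have hc : (G lo - lo) / (2 * π) * (2 * π) = G lo - lo := div_mul_cancel₀ _ two_pi_pos.ne'
    have h₁ := mul_le_mul_of_nonneg_right (Int.le_ceil ((G lo - lo) / (2 * π))) two_pi_pos.le
    have h₂ := mul_lt_mul_of_pos_right (Int.ceil_lt_add_one ((G lo - lo) / (2 * π))) two_pi_pos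
    rw [hc] at h₁
    rw [add_mul, hc] at h₂
    constructor <;> linarith
  have hwin (i : Bool) : ∃ a b, (lo ≤ a ∧ a ≤ b ∧ b ≤ hi) ∧
      G a = lo + 2 * π * (j₀ + i.toNat : ℤ) ∧ G b = hi + 2 * π * (j₀ + i.toNat : ℤ) + τ := by
    have hi01 : (i.toNat : ℝ) ≤ 1 := by cases i <;> simp
    push_cast
    obtain ⟨a, ha, hGa⟩ := intermediate_value_Icc hlohi hG
      (⟨by nlinarith [pi_pos], by nlinarith [pi_pos]⟩ :
        lo + 2 * π * (j₀ + i.toNat) ∈ Icc (G lo) (G hi))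
    obtain ⟨b, hb, hGb⟩ := intermediate_value_Icc ha.2 (hG.mono (Icc_subset_Icc_left ha.1))
      (⟨by rw [hGa]; linarith, by nlinarith [pi_pos]⟩ :
        hi + 2 * π * (j₀ + i.toNat) + τ ∈ Icc (G a) (G hi))
    exact ⟨a, b, ⟨ha.1, hb.1, hb.2⟩, hGa, hGb⟩
  choose a b hab hG using hwin
  exact ⟨a, b, fun i => j₀ + i.toNat, fun i i' h => by cases i <;> cases i' <;> simp_all, hab, hG⟩

theorem exists_homeomorph_conj_of_semiconj {S X : Type*} [TopologicalSpace S] [CompactSpace S]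
    [TopologicalSpace X] [T2Space X] {σ : S → S} {F : X → X} {Φ : S → X}
    (hσ : Surjective σ) (hc : Continuous Φ) (hi : Injective Φ) (hΦ : Semiconj Φ σ F) :
    IsCompact (range Φ) ∧ F '' range Φ = range Φ ∧
      ∃ e : range Φ ≃ₜ S, ∀ p q : range Φ, (q : X) = F p → e q = σ (e p) := by
  let e := ((hc.isClosedEmbedding hi).isEmbedding.toHomeomorph).symm
  have he : ∀ p : range Φ, Φ (e p) = p := fun p =>
    congrArg Subtype.val ((hc.isClosedEmbedding hi).isEmbedding.toHomeomorph.apply_symm_apply p)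
  refine ⟨isCompact_range hc, ?_, e, fun p q hq => hi ?_⟩
  · rw [← range_comp, ← hΦ.comp_eq, range_comp, hσ.range_eq, image_univ]
  · rw [he, hq, ← he p, hΦ.eq]

/-- Conley–Moser data for a skew map `(θ, Y) ↦ (g (θ, Y) mod 2π, q (θ, Y))` of the strip
`[lo, hi] × [0, ε]`: the windows `[a i, b i]` are stretched by `g` across the whole of
`[lo, hi] + 2π j i`, uniformly in `Y`, while `q` contracts. -/
structure ConleyMoserData where
  lo : ℝ
  hi : ℝ
  ε : ℝ
  a : Bool → ℝ
  b : Bool → ℝ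
  j : Bool → ℤ
  g : ℝ × ℝ → ℝ
  q : ℝ × ℝ → ℝ
  β : ℝ
  P : ℝ
  κ : ℝ
  γ : ℝ
  hi_sub_lo_lt : hi - lo < 2 * π
  ε_nonneg : 0 ≤ ε
  lo_le_a : ∀ i, lo ≤ a i
  a_le_b : ∀ i, a i ≤ b i
  b_le_hi : ∀ i, b i ≤ hi
  j_injective : Injective j
  covers : ∀ i, ∀ t ∈ Icc lo hi, ∀ Y ∈ Icc 0 ε, t + 2 * π * j i ∈ Icc (g (a i, Y)) (g (b i, Y))
  continuousOn_g : ContinuousOn g (Icc lo hi ×ˢ Icc 0 ε)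
  abs_sub_le_g : ∀ Y ∈ Icc 0 ε, ∀ θ ∈ Icc lo hi, ∀ θ' ∈ Icc lo hi,
    |θ - θ'| ≤ β * |g (θ, Y) - g (θ', Y)|
  abs_g_sub_le : ∀ θ ∈ Icc lo hi, ∀ Y ∈ Icc 0 ε, ∀ Y' ∈ Icc 0 ε,
    |g (θ, Y) - g (θ, Y')| ≤ P * |Y - Y'|
  mapsTo_q : MapsTo q (Icc lo hi ×ˢ Icc 0 ε) (Icc 0 ε)
  abs_q_sub_le : ∀ p ∈ Icc lo hi ×ˢ Icc 0 ε, ∀ p' ∈ Icc lo hi ×ˢ Icc 0 ε,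
    |q p - q p'| ≤ κ * dist p p'
  g_sub_eq_of_q_eq : ∀ p ∈ Icc lo hi ×ˢ Icc 0 ε, ∀ p' ∈ Icc lo hi ×ˢ Icc 0 ε,
    q p = q p' → g p - p.1 = g p' - p'.1
  snd_eq_of_q_eq : ∀ θ ∈ Icc lo hi, ∀ Y ∈ Icc 0 ε, ∀ Y' ∈ Icc 0 ε, q (θ, Y) = q (θ, Y') → Y = Y'
  β_nonneg : 0 ≤ β
  P_nonneg : 0 ≤ P
  κ_nonneg : 0 ≤ κ
  κ_le_γ : κ ≤ γ
  β_mul_le_γ : β * (1 + P * κ) ≤ γ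
  γ_lt_one : γ < 1

noncomputable section

namespace ConleyMoserData

variable (H : ConleyMoserData)

def strip : Set (ℝ × ℝ) := Icc H.lo H.hi ×ˢ Icc 0 H.ε

def window (i : Bool) : Set ℝ := Icc (H.a i) (H.b i)

lemma window_subset (i : Bool) : H.window i ⊆ Icc H.lo H.hi :=
  Icc_subset_Icc (H.lo_le_a i) (H.b_le_hi i)

lemma γ_nonneg : 0 ≤ H.γ := H.κ_nonneg.trans H.κ_le_γ

lemma isClosed_strip : IsClosed H.strip := isClosed_Icc.prod isClosed_Icc

def diamBound : ℝ := max (H.hi - H.lo) H.ε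

lemma dist_le_of_mem_strip {p p' : ℝ × ℝ} (hp : p ∈ H.strip) (hp' : p' ∈ H.strip) :
    dist p p' ≤ H.diamBound := by
  rw [diamBound, Prod.dist_eq, Real.dist_eq, Real.dist_eq]
  exact max_le_max (abs_sub_le_of_le_of_le hp.1.1 hp.1.2 hp'.1.1 hp'.1.2)
    (abs_sub_le_of_nonneg_of_le hp.2.1 hp.2.2 hp'.2.1 hp'.2.2)

lemma eq_of_add_two_pi_mul_eq {x x' : ℝ} {i i' : Bool} (hx : x ∈ Icc H.lo H.hi)
    (hx' : x' ∈ Icc H.lo H.hi) (h : x + 2 * π * H.j i = x' + 2 * π * H.j i') :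
    x = x' ∧ i = i' := by
  have hlt : |2 * π * ((H.j i' - H.j i : ℤ) : ℝ)| < 2 * π := by
    push_cast
    rw [show 2 * π * ((H.j i' : ℝ) - H.j i) = x - x' by linarith]
    exact (abs_sub_le_of_le_of_le hx.1 hx.2 hx'.1 hx'.2).trans_lt H.hi_sub_lo_lt
  rw [abs_mul, abs_of_pos two_pi_pos, mul_lt_iff_lt_one_right two_pi_pos, ← Int.cast_abs,
    ← Int.cast_one, Int.cast_lt, Int.abs_lt_one_iff, sub_eq_zero] at hlt
  have hi : i = i' := H.j_injective hlt.symm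
  subst hi
  exact ⟨by linarith, rfl⟩

lemma dist_le_of_step {θ Y θ' Y' : ℝ} {x x' z z' : ℝ × ℝ} {i : Bool}
    (hx : x ∈ H.strip) (hx' : x' ∈ H.strip) (hθ : θ ∈ Icc H.lo H.hi) (hθ' : θ' ∈ Icc H.lo H.hi)
    (hY : Y = H.q x) (hY' : Y' = H.q x')
    (hg : H.g (θ, Y) = z.1 + 2 * π * H.j i) (hg' : H.g (θ', Y') = z'.1 + 2 * π * H.j i) :
    dist (θ, Y) (θ', Y') ≤ H.γ * max (dist x x') (dist z z') := by
  set M := max (dist x x') (dist z z')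
  have hYmem : Y ∈ Icc 0 H.ε := hY ▸ H.mapsTo_q hx
  have hY'mem : Y' ∈ Icc 0 H.ε := hY' ▸ H.mapsTo_q hx'
  have hdY : |Y - Y'| ≤ H.κ * M := by
    rw [hY, hY']
    exact (H.abs_q_sub_le x hx x' hx').trans (by gcongr; exacts [H.κ_nonneg, le_max_left _ _])
  have hdθ : |θ - θ'| ≤ H.β * (1 + H.P * H.κ) * M := by
    have hdz : |z.1 - z'.1| ≤ M := (abs_fst_sub_le_dist z z').trans (le_max_right _ _)
    calc |θ - θ'| ≤ H.β * |H.g (θ, Y) - H.g (θ', Y)| := H.abs_sub_le_g Y hYmem θ hθ θ' hθ'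
      _ ≤ H.β * (|H.g (θ, Y) - H.g (θ', Y')| + |H.g (θ', Y') - H.g (θ', Y)|) := by
          gcongr
          · exact H.β_nonneg
          · exact abs_sub_le _ _ _
      _ ≤ H.β * (M + H.P * (H.κ * M)) := by
          have hdg : |H.g (θ, Y) - H.g (θ', Y')| ≤ M := by
            rwa [hg, hg', add_sub_add_right_eq_sub]
          have hdg' : |H.g (θ', Y') - H.g (θ', Y)| ≤ H.P * (H.κ * M) :=
            (H.abs_g_sub_le θ' hθ' Y' hY'mem Y hYmem).trans
              (mul_le_mul_of_nonneg_left (abs_sub_comm Y' Y ▸ hdY) H.P_nonneg)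
          exact mul_le_mul_of_nonneg_left (add_le_add hdg hdg') H.β_nonneg
      _ = H.β * (1 + H.P * H.κ) * M := by ring
  have hM : 0 ≤ M := dist_nonneg.trans (le_max_left _ _)
  rw [Prod.dist_eq, Real.dist_eq, Real.dist_eq]
  exact max_le (hdθ.trans (by gcongr; exact H.β_mul_le_γ))
    (hdY.trans (by gcongr; exact H.κ_le_γ))

def preimage (i : Bool) (t Y : ℝ) : ℝ :=
  Classical.epsilon fun θ => θ ∈ H.window i ∧ H.g (θ, Y) = t + 2 * π * H.j i

lemma preimage_spec (i : Bool) {t Y : ℝ} (ht : t ∈ Icc H.lo H.hi) (hY : Y ∈ Icc 0 H.ε) :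
    H.preimage i t Y ∈ H.window i ∧ H.g (H.preimage i t Y, Y) = t + 2 * π * H.j i := by
  have hcont : ContinuousOn (fun θ => H.g (θ, Y)) (H.window i) :=
    H.continuousOn_g.comp (continuousOn_id.prodMk continuousOn_const)
      fun θ hθ => ⟨H.window_subset i hθ, hY⟩
  exact Classical.epsilon_spec (p := fun θ => θ ∈ H.window i ∧ H.g (θ, Y) = t + 2 * π * H.j i)
    (intermediate_value_Icc (H.a_le_b i) hcont (H.covers i t ht Y hY))

structure IsCodedOrbit (s : ℤ → Bool) (u : ℤ → ℝ × ℝ) : Prop where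
  fst_mem : ∀ n, (u n).1 ∈ H.window (s n)
  snd_mem : ∀ n, (u n).2 ∈ Icc 0 H.ε
  snd_eq : ∀ n, (u n).2 = H.q (u (n - 1))
  g_eq : ∀ n, H.g (u n) = (u (n + 1)).1 + 2 * π * H.j (s n)

/-- The new `Y` at time `n` is pushed forward from time `n - 1` and the new `θ` pulled back
from time `n + 1`: both directions contract. -/
def codingStep (s : ℤ → Bool) (u : ℤ → ℝ × ℝ) (n : ℤ) : ℝ × ℝ :=
  (H.preimage (s n) (u (n + 1)).1 (H.q (u (n - 1))), H.q (u (n - 1)))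

def approxOrbit (s : ℤ → Bool) : ℕ → ℤ → ℝ × ℝ
  | 0 => fun n => (H.a (s n), 0)
  | k + 1 => H.codingStep s (approxOrbit s k)

lemma approxOrbit_mem (s : ℤ → Bool) (k : ℕ) (n : ℤ) :
    (H.approxOrbit s k n).1 ∈ H.window (s n) ∧ (H.approxOrbit s k n).2 ∈ Icc 0 H.ε := by
  induction k generalizing n with
  | zero => exact ⟨⟨le_rfl, H.a_le_b _⟩, ⟨le_rfl, H.ε_nonneg⟩⟩
  | succ k ih =>
    have hprev := H.mapsTo_q ⟨H.window_subset _ (ih (n - 1)).1, (ih (n - 1)).2⟩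
    exact ⟨(H.preimage_spec (s n) (H.window_subset _ (ih (n + 1)).1) hprev).1, hprev⟩

lemma approxOrbit_mem_strip (s : ℤ → Bool) (k : ℕ) (n : ℤ) : H.approxOrbit s k n ∈ H.strip :=
  ⟨H.window_subset _ (H.approxOrbit_mem s k n).1, (H.approxOrbit_mem s k n).2⟩

lemma g_approxOrbit_succ (s : ℤ → Bool) (k : ℕ) (n : ℤ) :
    H.g (H.approxOrbit s (k + 1) n) = (H.approxOrbit s k (n + 1)).1 + 2 * π * H.j (s n) :=
  (H.preimage_spec (s n) (H.approxOrbit_mem_strip s k (n + 1)).1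
    (H.mapsTo_q (H.approxOrbit_mem_strip s k (n - 1)))).2

lemma dist_approxOrbit_succ_le (s : ℤ → Bool) (k : ℕ) (n : ℤ) :
    dist (H.approxOrbit s (k + 1) n) (H.approxOrbit s k n) ≤ H.γ ^ k * H.diamBound := by
  induction k generalizing n with
  | zero =>
    simpa using H.dist_le_of_mem_strip (H.approxOrbit_mem_strip s 1 n)
      (H.approxOrbit_mem_strip s 0 n)
  | succ k ih =>
    calc dist (H.approxOrbit s (k + 2) n) (H.approxOrbit s (k + 1) n)
        ≤ H.γ * max (dist (H.approxOrbit s (k + 1) (n - 1)) (H.approxOrbit s k (n - 1)))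
            (dist (H.approxOrbit s (k + 1) (n + 1)) (H.approxOrbit s k (n + 1))) :=
          H.dist_le_of_step (H.approxOrbit_mem_strip s _ _) (H.approxOrbit_mem_strip s _ _)
            (H.approxOrbit_mem_strip s (k + 2) n).1 (H.approxOrbit_mem_strip s (k + 1) n).1 rfl rfl
            (H.g_approxOrbit_succ s (k + 1) n) (H.g_approxOrbit_succ s k n)
      _ ≤ H.γ * (H.γ ^ k * H.diamBound) := by
          gcongr
          · exact H.γ_nonneg
          · exact max_le (ih _) (ih _)
      _ = H.γ ^ (k + 1) * H.diamBound := by ring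

lemma tendsto_comp_of_continuousOn {f : ℝ × ℝ → ℝ} (hf : ContinuousOn f H.strip)
    {v : ℕ → ℝ × ℝ} {p : ℝ × ℝ} (hv : Tendsto v atTop (𝓝 p)) (hvmem : ∀ k, v k ∈ H.strip) :
    Tendsto (fun k => f (v k)) atTop (𝓝 (f p)) :=
  (hf p (H.isClosed_strip.mem_of_tendsto hv (Eventually.of_forall hvmem))).tendsto.comp
    (tendsto_nhdsWithin_iff.2 ⟨hv, Eventually.of_forall hvmem⟩)

lemma continuousOn_q : ContinuousOn H.q H.strip :=
  (LipschitzOnWith.of_dist_le_mul (K := ⟨H.κ, H.κ_nonneg⟩) fun p hp p' hp' => by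
    rw [Real.dist_eq]; exact H.abs_q_sub_le p hp p' hp').continuousOn

lemma exists_isCodedOrbit (s : ℤ → Bool) : ∃ u, H.IsCodedOrbit s u := by
  have hcauchy (n : ℤ) : CauchySeq fun k => H.approxOrbit s k n :=
    cauchySeq_of_le_geometric H.γ H.diamBound H.γ_lt_one fun k => by
      rw [dist_comm, mul_comm]; exact H.dist_approxOrbit_succ_le s k n
  choose u hu using fun n => cauchySeq_tendsto_of_complete (hcauchy n)
  have hu' (n : ℤ) : Tendsto (fun k => H.approxOrbit s (k + 1) n) atTop (𝓝 (u n)) :=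
    (hu n).comp (tendsto_add_atTop_nat 1)
  have hmem (n : ℤ) : u n ∈ H.window (s n) ×ˢ Icc 0 H.ε :=
    (isClosed_Icc.prod isClosed_Icc).mem_of_tendsto (hu n)
      (Eventually.of_forall fun k => H.approxOrbit_mem s k n)
  refine ⟨u, fun n => (hmem n).1, fun n => (hmem n).2, fun n => ?_, fun n => ?_⟩
  · exact tendsto_nhds_unique ((continuous_snd.tendsto _).comp (hu' n))
      (H.tendsto_comp_of_continuousOn H.continuousOn_q (hu (n - 1))
        (H.approxOrbit_mem_strip s · (n - 1)))
  · refine tendsto_nhds_unique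
      (H.tendsto_comp_of_continuousOn H.continuousOn_g (hu' n)
        fun k => H.approxOrbit_mem_strip s (k + 1) n) ?_
    simp_rw [H.g_approxOrbit_succ]
    exact ((continuous_fst.tendsto _).comp (hu (n + 1))).add_const _

variable {H : ConleyMoserData} {s s' : ℤ → Bool} {u v : ℤ → ℝ × ℝ}

namespace IsCodedOrbit

lemma mem_strip (hu : H.IsCodedOrbit s u) (n : ℤ) : u n ∈ H.strip :=
  ⟨H.window_subset _ (hu.fst_mem n), hu.snd_mem n⟩

lemma dist_le (hu : H.IsCodedOrbit s u) (hv : H.IsCodedOrbit s' v) {N : ℕ}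
    (hs : ∀ m : ℤ, m.natAbs ≤ N → s m = s' m) {k : ℕ} {n : ℤ} (hn : n.natAbs + k ≤ N + 1) :
    dist (u n) (v n) ≤ H.γ ^ k * H.diamBound := by
  refine le_pow_mul_of_le_mul_max H.γ_nonneg
    (fun n => H.dist_le_of_mem_strip (hu.mem_strip n) (hv.mem_strip n)) (fun n hn => ?_) k n hn
  exact H.dist_le_of_step (hu.mem_strip _) (hv.mem_strip _) (hu.mem_strip n).1 (hv.mem_strip n).1
    (hu.snd_eq n) (hv.snd_eq n) (hu.g_eq n) (hs n hn ▸ hv.g_eq n)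

lemma eq (hu : H.IsCodedOrbit s u) (hv : H.IsCodedOrbit s v) : u = v := by
  funext n
  have hlim := (tendsto_pow_atTop_nhds_zero_of_lt_one H.γ_nonneg H.γ_lt_one).mul_const H.diamBound
  rw [zero_mul] at hlim
  exact dist_le_zero.1 (ge_of_tendsto' hlim fun k =>
    hu.dist_le hv (N := n.natAbs + k) (fun _ _ => rfl) (by omega))

lemma shift (hu : H.IsCodedOrbit s u) :
    H.IsCodedOrbit (fun n => s (n + 1)) (fun n => u (n + 1)) where
  fst_mem n := hu.fst_mem (n + 1)
  snd_mem n := hu.snd_mem (n + 1)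
  snd_eq n := by simpa using hu.snd_eq (n + 1)
  g_eq n := hu.g_eq (n + 1)

lemma succ_eq (hu : H.IsCodedOrbit s u) (hv : H.IsCodedOrbit s' v) {n : ℤ} (h : u n = v n) :
    u (n + 1) = v (n + 1) ∧ s n = s' n := by
  have hg := hu.g_eq n
  rw [h, hv.g_eq n] at hg
  obtain ⟨hfst, hs⟩ := H.eq_of_add_two_pi_mul_eq (hv.mem_strip _).1 (hu.mem_strip _).1 hg
  refine ⟨Prod.ext hfst.symm ?_, hs.symm⟩
  rw [hu.snd_eq, hv.snd_eq, add_sub_cancel_right, h]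

lemma eq_of_succ_eq (hu : H.IsCodedOrbit s u) (hv : H.IsCodedOrbit s' v) {n : ℤ}
    (h : u (n + 1) = v (n + 1)) : u n = v n := by
  have hq : H.q (u n) = H.q (v n) := by
    have hu' := hu.snd_eq (n + 1)
    have hv' := hv.snd_eq (n + 1)
    rw [add_sub_cancel_right] at hu' hv'
    rw [← hu', ← hv', h]
  have hg := H.g_sub_eq_of_q_eq _ (hu.mem_strip n) _ (hv.mem_strip n) hq
  rw [hu.g_eq, hv.g_eq, h] at hg
  have hfst := (H.eq_of_add_two_pi_mul_eq (hv.mem_strip n).1 (hu.mem_strip n).1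
    (by linarith : (v n).1 + 2 * π * H.j (s n) = (u n).1 + 2 * π * H.j (s' n))).1
  refine Prod.ext hfst.symm (H.snd_eq_of_q_eq _ (hu.mem_strip n).1 _ (hu.mem_strip n).2 _
    (hv.mem_strip n).2 ?_)
  rwa [show v n = ((u n).1, (v n).2) from Prod.ext hfst rfl] at hq

lemma symbols_eq (hu : H.IsCodedOrbit s u) (hv : H.IsCodedOrbit s' v) (h₀ : u 0 = v 0) :
    s = s' := by
  have huv (n : ℤ) : u n = v n := by
    induction n using Int.induction_on with
    | zero => exact h₀
    | succ n ih => exact (hu.succ_eq hv ih).1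
    | pred n ih => exact hu.eq_of_succ_eq hv (by simpa using ih)
  exact funext fun n => (hu.succ_eq hv (huv n)).2

end IsCodedOrbit

variable (H)

def codedOrbit (s : ℤ → Bool) : ℤ → ℝ × ℝ := (H.exists_isCodedOrbit s).choose

lemma isCodedOrbit_codedOrbit (s : ℤ → Bool) : H.IsCodedOrbit s (H.codedOrbit s) :=
  (H.exists_isCodedOrbit s).choose_spec

lemma codedOrbit_shift (s : ℤ → Bool) :
    H.codedOrbit (fun n => s (n + 1)) = fun n => H.codedOrbit s (n + 1) :=
  (H.isCodedOrbit_codedOrbit _).eq (H.isCodedOrbit_codedOrbit s).shift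

def codedPoint (s : ℤ → Bool) : ℝ × ℝ := H.codedOrbit s 0

lemma codedPoint_mem_strip (s : ℤ → Bool) : H.codedPoint s ∈ H.strip :=
  (H.isCodedOrbit_codedOrbit s).mem_strip 0

lemma coe_g_codedPoint (s : ℤ → Bool) :
    (H.g (H.codedPoint s) : AddCircle (2 * π)) = (H.codedPoint fun n => s (n + 1)).1 := by
  rw [codedPoint, codedPoint, codedOrbit_shift, (H.isCodedOrbit_codedOrbit s).g_eq,
    coe_add_two_pi_mul_int]

lemma q_codedPoint (s : ℤ → Bool) :
    H.q (H.codedPoint s) = (H.codedPoint fun n => s (n + 1)).2 := by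
  rw [codedPoint, codedPoint, codedOrbit_shift, (H.isCodedOrbit_codedOrbit s).snd_eq]
  simp

lemma continuous_codedPoint : Continuous H.codedPoint := by
  refine continuous_iff_continuousAt.2 fun s => Metric.tendsto_nhds.2 fun r hr => ?_
  have hlim := (tendsto_pow_atTop_nhds_zero_of_lt_one H.γ_nonneg H.γ_lt_one).mul_const H.diamBound
  rw [zero_mul] at hlim
  obtain ⟨N, hN⟩ := (hlim.eventually (gt_mem_nhds hr)).exists
  have hagree : ∀ᶠ s' in 𝓝 s, ∀ m ∈ Finset.Icc (-N : ℤ) N, s' m = s m :=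
    (Finset.eventually_all _).2 fun m _ =>
      tendsto_pure.1 (by simpa only [nhds_discrete] using (continuous_apply m).tendsto s)
  filter_upwards [hagree] with s' hs'
  exact ((H.isCodedOrbit_codedOrbit s').dist_le (H.isCodedOrbit_codedOrbit s) (N := N)
    (fun m hm => hs' m (Finset.mem_Icc.2 (by omega))) (k := N) (by simp)).trans_lt hN

lemma injective_coe_codedPoint :
    Injective fun s => (((H.codedPoint s).1 : AddCircle (2 * π)), (H.codedPoint s).2) := by
  have : Fact (0 < 2 * π) := ⟨two_pi_pos⟩
  intro s s' h
  simp only [Prod.mk.injEq] at h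
  have hIco {s : ℤ → Bool} : (H.codedPoint s).1 ∈ Ico H.lo (H.lo + 2 * π) :=
    ⟨(H.codedPoint_mem_strip s).1.1, by linarith [(H.codedPoint_mem_strip s).1.2, H.hi_sub_lo_lt]⟩
  exact (H.isCodedOrbit_codedOrbit s).symbols_eq (H.isCodedOrbit_codedOrbit s')
    (Prod.ext ((AddCircle.coe_eq_coe_iff_of_mem_Ico hIco hIco).1 h.1) h.2)

end ConleyMoserData

namespace ReturnMap

/-- The threshold `f(K)` for the ratio `λ / A`. -/
def criticalRatio (K : ℝ) : ℝ := (exp (4 * π / K) - 1) / (exp (4 * π / K) - 1 / 4)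

/-- The margin `ρ` of the arc `[π/2 + ρ, 3π/2 - ρ]`; the last two bounds are what the two cases
of `climb` need. -/
def margin (K : ℝ) : ℝ :=
  min (1 / 10) (min (2 / 3 * exp (-(4 * π + 1) / K)) (log (1 + criticalRatio K) / 2))

def regionLo (K : ℝ) : ℝ := π / 2 + margin K

def regionHi (K : ℝ) : ℝ := 3 * π / 2 - margin K

def w (r : ℝ) (p : ℝ × ℝ) : ℝ := 1 + r * sin p.1 + p.2

def g (K A r : ℝ) (p : ℝ × ℝ) : ℝ := p.1 - K * log A - K * log (w r p)

def q (δ A r : ℝ) (p : ℝ × ℝ) : ℝ := A ^ (δ - 1) * w r p ^ δ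

def expansion (K : ℝ) : ℝ := K * criticalRatio K * margin K / 6

def logLipschitz (K : ℝ) : ℝ := 5 * K / margin K ^ 2

def yMax (δ A : ℝ) : ℝ := 3 ^ δ * A ^ (δ - 1)

def qLipschitz (δ A : ℝ) : ℝ := 2 * δ * 3 ^ (δ - 1) * A ^ (δ - 1)

structure IsSmall (δ K A : ℝ) : Prop where
  yMax_le_one : yMax δ A ≤ 1
  logLipschitz_mul_yMax_le : logLipschitz K * yMax δ A ≤ min 1 (K * log (1 + criticalRatio K) / 2)
  qLipschitz_lt_one : qLipschitz δ A < 1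
  logLipschitz_mul_qLipschitz_lt : logLipschitz K * qLipschitz δ A < expansion K

structure Params (δ K A r : ℝ) : Prop where
  one_lt_δ : 1 < δ
  K_pos : 0 < K
  A_pos : 0 < A
  criticalRatio_lt : criticalRatio K < r
  r_lt_one : r < 1
  small : IsSmall δ K A

section Constants

variable {K : ℝ} (hK : 0 < K)
include hK

lemma one_lt_exp_four_pi_div : 1 < exp (4 * π / K) := one_lt_exp_iff.2 (by positivity)

lemma criticalRatio_pos : 0 < criticalRatio K := by
  have := one_lt_exp_four_pi_div hK
  exact div_pos (by linarith) (by linarith)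

lemma log_one_add_criticalRatio_pos : 0 < log (1 + criticalRatio K) :=
  log_pos (by linarith [criticalRatio_pos hK])

lemma margin_pos : 0 < margin K := by
  have := log_one_add_criticalRatio_pos hK
  simp only [margin, lt_min_iff]
  exact ⟨by norm_num, by positivity, by positivity⟩

lemma expansion_pos : 0 < expansion K := by
  have := criticalRatio_pos hK; have := margin_pos hK
  unfold expansion; positivity

lemma logLipschitz_pos : 0 < logLipschitz K := by
  have := margin_pos hK; unfold logLipschitz; positivity

omit hK in
lemma margin_le_tenth : margin K ≤ 1 / 10 := min_le_left _ _

omit hK in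
lemma margin_le_exp : margin K ≤ 2 / 3 * exp (-(4 * π + 1) / K) :=
  (min_le_right _ _).trans (min_le_left _ _)

omit hK in
lemma margin_le_log : margin K ≤ log (1 + criticalRatio K) / 2 :=
  (min_le_right _ _).trans (min_le_right _ _)

omit hK in
lemma regionLo_le_regionHi : regionLo K ≤ regionHi K := by
  unfold regionLo regionHi; linarith [margin_le_tenth (K := K), pi_gt_three]

lemma margin_div_two_le_neg_cos {θ : ℝ} (hθ : θ ∈ Icc (regionLo K) (regionHi K)) :
    margin K / 2 ≤ -cos θ := by
  obtain ⟨h₁, h₂⟩ := hθ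
  simp only [regionLo, regionHi] at h₁ h₂
  have hρ := margin_pos hK
  have hρ' := margin_le_tenth (K := K)
  have hπ := pi_gt_three
  have hsin (t : ℝ) (ht₀ : margin K ≤ t) (ht₁ : t ≤ π / 2) : margin K / 2 ≤ sin t := by
    have := mul_le_sin (by linarith) ht₁
    have : 1 / 2 ≤ 2 / π := by rw [div_le_div_iff₀ two_pos pi_pos]; linarith [pi_le_four]
    have : 1 / 2 * t ≤ 2 / π * t := mul_le_mul_of_nonneg_right this (by linarith)
    linarith
  rcases le_total θ π with hθπ | hθπ
  · rw [← sin_sub_pi_div_two]; exact hsin _ (by linarith) (by linarith)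
  · rw [← sin_sub_pi_div_two, ← sin_pi_sub]; exact hsin _ (by linarith) (by linarith)

lemma margin_sq_div_five_le : margin K ^ 2 / 5 ≤ 1 - cos (margin K) := by
  have hρ := margin_pos hK
  have hcos := cos_le_one_sub_mul_cos_sq
    (abs_le.2 ⟨by linarith [pi_pos], by linarith [margin_le_tenth (K := K), pi_gt_three]⟩)
  have : 1 / 5 ≤ 2 / π ^ 2 := by
    rw [div_le_div_iff₀ (by norm_num) (by positivity)]; nlinarith [pi_lt_d2, pi_gt_three]
  nlinarith [sq_nonneg (margin K)]

end Constants

section Climb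

variable {K r : ℝ} (hK : 0 < K) (hr : criticalRatio K < r) (hr1 : r < 1)
include hK hr hr1

/-- `f(K) < r` is exactly `4π / K < log ((1 - r/4) / (1 - r))`. -/
lemma four_pi_div_lt_log_sub_log : 4 * π / K < log (1 - r / 4) - log (1 - r) := by
  have hE := one_lt_exp_four_pi_div hK
  have hEr : exp (4 * π / K) * (1 - r) < 1 - r / 4 := by
    rw [criticalRatio, div_lt_iff₀ (by linarith)] at hr
    linarith
  rw [← log_div (by linarith) (by linarith),
    lt_log_iff_exp_lt (div_pos (by linarith) (by linarith)), lt_div_iff₀ (by linarith)]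
  exact hEr

/-- Far from the fold (`ρ ≤ 1 - r`) the climb comes from `f(K) < r`. -/
lemma climb_of_margin_le (hρr : margin K ≤ 1 - r) :
    4 * π + K * log (1 + criticalRatio K) / 2 ≤
      K * (log (1 + r * cos (margin K)) - log (1 - r * cos (margin K))) := by
  set ρ := margin K
  set f := criticalRatio K
  set c := cos ρ
  have hρ := margin_pos hK
  have hρ' : ρ ≤ 1 / 10 := margin_le_tenth
  have hf := criticalRatio_pos hK
  have hr0 : 0 < r := hf.trans hr
  have hc₁ : c ≤ 1 := cos_le_one ρ
  have hc₀ : 1 - ρ ^ 2 / 2 ≤ c := one_sub_sq_div_two_le_cos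
  have hρ2 : 0 < 1 - ρ ^ 2 / 2 := by nlinarith
  have hlow : (1 - r / 4) * (1 + f) * (1 - ρ ^ 2 / 2) ≤ 1 + r * c := by
    have h₁ : (1 - r / 4) * (1 + f) ≤ 1 + r := by nlinarith
    have h₂ : (1 + r) * (1 - ρ ^ 2 / 2) ≤ 1 + r * c := by nlinarith
    nlinarith
  have hup : 1 - r * c ≤ (1 - r) * (1 + ρ / 2) := by nlinarith
  have hl₁ : log (1 - ρ ^ 2 / 2) ≥ -(ρ / 2) := by
    have := log_le_sub_one_of_pos (inv_pos.2 hρ2)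
    rw [log_inv] at this
    have : (1 - ρ ^ 2 / 2)⁻¹ - 1 ≤ ρ / 2 := by
      rw [inv_eq_one_div, div_sub_one (by nlinarith), div_le_iff₀ (by nlinarith)]; nlinarith
    linarith
  have hl₂ : log (1 + ρ / 2) ≤ ρ / 2 := by
    linarith [log_le_sub_one_of_pos (by linarith : 0 < 1 + ρ / 2)]
  have hlog₁ := log_le_log (mul_pos (mul_pos (by linarith) (by linarith)) hρ2) hlow
  have hlog₂ := log_le_log (by nlinarith) hup
  rw [log_mul (by nlinarith) (by nlinarith), log_mul (by linarith) (by linarith)] at hlog₁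
  rw [log_mul (by linarith) (by linarith)] at hlog₂
  have h4π := four_pi_div_lt_log_sub_log hK hr hr1
  have hρf : ρ ≤ log (1 + f) / 2 := margin_le_log
  have hsum : 4 * π / K + log (1 + f) / 2 ≤ log (1 + r * c) - log (1 - r * c) := by linarith
  calc 4 * π + K * log (1 + f) / 2 = K * (4 * π / K + log (1 + f) / 2) := by field_simp
    _ ≤ K * (log (1 + r * c) - log (1 - r * c)) := by gcongr

/-- Near the fold (`1 - r < ρ`) the climb comes from `log (1 - r cos ρ)` being very negative. -/
lemma climb_of_lt_margin (hρr : 1 - r < margin K) :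
    4 * π + 1 ≤ K * (log (1 + r * cos (margin K)) - log (1 - r * cos (margin K))) := by
  set ρ := margin K
  have hρ := margin_pos hK
  have hρ' : ρ ≤ 1 / 10 := margin_le_tenth
  have hr0 : 0 < r := (criticalRatio_pos hK).trans hr
  have hc₁ : cos ρ ≤ 1 := cos_le_one ρ
  have hc₀ : 1 - ρ ^ 2 / 2 ≤ cos ρ := one_sub_sq_div_two_le_cos
  have hpos : 0 < 1 - r * cos ρ := by nlinarith
  have hlog₁ : 0 ≤ log (1 + r * cos ρ) := log_nonneg (by nlinarith)
  have hlog₂ : log (1 - r * cos ρ) ≤ -(4 * π + 1) / K := by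
    calc log (1 - r * cos ρ) ≤ log (3 / 2 * ρ) := log_le_log hpos (by nlinarith)
      _ ≤ -(4 * π + 1) / K := by
        rw [log_le_iff_le_exp (by positivity)]
        linarith [margin_le_exp (K := K)]
  calc 4 * π + 1 = K * ((4 * π + 1) / K) := by field_simp
    _ ≤ K * (log (1 + r * cos ρ) - log (1 - r * cos ρ)) := by
        gcongr
        linarith [neg_div K (4 * π + 1)]

lemma climb {τ : ℝ} (hτ : τ ≤ min 1 (K * log (1 + criticalRatio K) / 2)) :
    4 * π + τ ≤ K * (log (1 + r * cos (margin K)) - log (1 - r * cos (margin K))) := by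
  rcases le_or_gt (margin K) (1 - r) with hρr | hρr
  · linarith [climb_of_margin_le hK hr hr1 hρr, min_le_right 1 (K * log (1 + criticalRatio K) / 2)]
  · linarith [climb_of_lt_margin hK hr hr1 hρr, min_le_left 1 (K * log (1 + criticalRatio K) / 2)]

end Climb

namespace Params

variable {δ K A r : ℝ} (hp : Params δ K A r)
include hp

lemma r_pos : 0 < r := (criticalRatio_pos hp.K_pos).trans hp.criticalRatio_lt

lemma yMax_nonneg : 0 ≤ yMax δ A := by have := hp.A_pos; unfold yMax; positivity

lemma w_pos {p : ℝ × ℝ} (hY : 0 ≤ p.2) : 0 < w r p := by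
  have := neg_one_le_sin p.1
  have := hp.r_pos
  unfold w; nlinarith [hp.r_lt_one]

lemma w_le_three {p : ℝ × ℝ} (hY : p.2 ≤ 1) : w r p ≤ 3 := by
  have := sin_le_one p.1
  have := hp.r_pos
  unfold w; nlinarith [hp.r_lt_one]

lemma margin_sq_div_five_le_w {p : ℝ × ℝ} (hθ : p.1 ∈ Icc (regionLo K) (regionHi K))
    (hY : 0 ≤ p.2) : margin K ^ 2 / 5 ≤ w r p := by
  have hρ := margin_pos hp.K_pos
  have hsin : -cos (margin K) ≤ sin p.1 := by
    rw [← cos_pi_sub, ← cos_sub_pi_div_two]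
    simp only [regionLo, regionHi, mem_Icc] at hθ
    exact cos_le_cos_of_nonneg_of_le_pi (by linarith) (by linarith) (by linarith)
  have hcos : 0 ≤ cos (margin K) := cos_nonneg_of_mem_Icc
    ⟨by linarith [pi_pos], by linarith [margin_le_tenth (K := K), pi_gt_three]⟩
  have := margin_sq_div_five_le hp.K_pos
  unfold w; nlinarith [hp.r_lt_one, hp.r_pos]

lemma hasDerivAt_g {θ Y : ℝ} (hY : 0 ≤ Y) :
    HasDerivAt (fun θ => g K A r (θ, Y)) (1 - K * (r * cos θ / w r (θ, Y))) θ := by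
  have hw : HasDerivAt (fun θ => w r (θ, Y)) (r * cos θ) θ :=
    (((hasDerivAt_sin θ).const_mul r).const_add 1).add_const Y
  exact ((hasDerivAt_id θ).sub_const _).sub ((hw.log (hp.w_pos (p := (θ, Y)) hY).ne').const_mul K)

lemma continuousOn_g : ContinuousOn (g K A r) {p | 0 ≤ p.2} := by
  have hw : Continuous (w r) := by unfold w; fun_prop
  unfold g
  exact (continuousOn_fst.sub continuousOn_const).sub
    (continuousOn_const.mul (hw.continuousOn.log fun p hp' => (hp.w_pos hp').ne'))

lemma one_add_expansion_le_deriv {θ Y : ℝ} (hθ : θ ∈ Icc (regionLo K) (regionHi K))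
    (hY : Y ∈ Icc 0 1) : 1 + expansion K ≤ 1 - K * (r * cos θ / w r (θ, Y)) := by
  have hw₀ := hp.w_pos (p := (θ, Y)) hY.1
  have hcos := margin_div_two_le_neg_cos hp.K_pos hθ
  have hnum : criticalRatio K * (margin K / 2) ≤ r * -cos θ :=
    mul_le_mul hp.criticalRatio_lt.le hcos (by linarith [margin_pos hp.K_pos]) hp.r_pos.le
  have hden : r * -cos θ / 3 ≤ r * -cos θ / w r (θ, Y) :=
    div_le_div_of_nonneg_left (by nlinarith [margin_pos hp.K_pos, hp.r_pos]) hw₀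
      (hp.w_le_three hY.2)
  have := mul_le_mul_of_nonneg_left ((div_le_div_of_nonneg_right hnum (by norm_num)).trans hden)
    hp.K_pos.le
  calc 1 + expansion K = 1 + K * (criticalRatio K * (margin K / 2) / 3) := by
        unfold expansion; ring
    _ ≤ 1 + K * (r * -cos θ / w r (θ, Y)) := by linarith
    _ = 1 - K * (r * cos θ / w r (θ, Y)) := by ring

lemma one_add_expansion_mul_sub_le {Y θ θ' : ℝ} (hY : Y ∈ Icc 0 1)
    (hθ : θ ∈ Icc (regionLo K) (regionHi K)) (hθ' : θ' ∈ Icc (regionLo K) (regionHi K))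
    (hle : θ ≤ θ') :
    (1 + expansion K) * (θ' - θ) ≤ g K A r (θ', Y) - g K A r (θ, Y) := by
  refine (convex_Icc _ _).mul_sub_le_image_sub_of_le_deriv
    (fun x _ => (hp.hasDerivAt_g hY.1).continuousAt.continuousWithinAt)
    (fun x _ => (hp.hasDerivAt_g hY.1).differentiableAt.differentiableWithinAt)
    (fun x hx => ?_) θ hθ θ' hθ' hle
  rw [(hp.hasDerivAt_g hY.1).deriv]
  exact hp.one_add_expansion_le_deriv (interior_subset hx) hY

lemma abs_sub_le_g {Y θ θ' : ℝ} (hY : Y ∈ Icc 0 1)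
    (hθ : θ ∈ Icc (regionLo K) (regionHi K)) (hθ' : θ' ∈ Icc (regionLo K) (regionHi K)) :
    |θ - θ'| ≤ (1 + expansion K)⁻¹ * |g K A r (θ, Y) - g K A r (θ', Y)| := by
  wlog hle : θ' ≤ θ generalizing θ θ'
  · rw [abs_sub_comm, abs_sub_comm (g K A r _)]; exact this hθ' hθ (le_of_not_ge hle)
  have hm := expansion_pos hp.K_pos
  have := hp.one_add_expansion_mul_sub_le hY hθ' hθ hle
  rw [le_inv_mul_iff₀ (by linarith), abs_of_nonneg (sub_nonneg.2 hle),
    abs_of_nonneg (by nlinarith)]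
  exact this

lemma abs_g_sub_le {θ Y Y' : ℝ} (hθ : θ ∈ Icc (regionLo K) (regionHi K)) (hY : 0 ≤ Y)
    (hY' : 0 ≤ Y') : |g K A r (θ, Y) - g K A r (θ, Y')| ≤ logLipschitz K * |Y - Y'| := by
  have hρ := margin_pos hp.K_pos
  have hlog := abs_log_sub_log_le (by positivity) (hp.margin_sq_div_five_le_w (p := (θ, Y')) hθ hY')
    (hp.margin_sq_div_five_le_w (p := (θ, Y)) hθ hY)
  have hg : g K A r (θ, Y) - g K A r (θ, Y') = K * (log (w r (θ, Y')) - log (w r (θ, Y))) := by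
    unfold g; ring
  have hw : w r (θ, Y') - w r (θ, Y) = Y' - Y := by unfold w; ring
  rw [hg, abs_mul, abs_of_pos hp.K_pos, abs_sub_comm Y]
  rw [hw] at hlog
  calc K * |log (w r (θ, Y')) - log (w r (θ, Y))| ≤ K * (|Y' - Y| / (margin K ^ 2 / 5)) :=
        mul_le_mul_of_nonneg_left hlog hp.K_pos.le
    _ = logLipschitz K * |Y' - Y| := by unfold logLipschitz; field_simp

lemma q_mem_Icc {p : ℝ × ℝ} (hY : p.2 ∈ Icc 0 1) : q δ A r p ∈ Icc 0 (yMax δ A) := by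
  have hw := hp.w_pos hY.1
  have hA := hp.A_pos
  refine ⟨by unfold q; positivity, ?_⟩
  rw [q, yMax, mul_comm (3 ^ δ)]
  gcongr
  · linarith [hp.one_lt_δ]
  · exact hp.w_le_three hY.2

lemma abs_q_sub_le {p p' : ℝ × ℝ} (hY : p.2 ∈ Icc 0 1) (hY' : p'.2 ∈ Icc 0 1) :
    |q δ A r p - q δ A r p'| ≤ qLipschitz δ A * dist p p' := by
  have hA := hp.A_pos
  have hδ := hp.one_lt_δ
  have hw : |w r p - w r p'| ≤ 2 * dist p p' := by
    have hsin : |r * (sin p.1 - sin p'.1)| ≤ |p.1 - p'.1| := by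
      rw [abs_mul, abs_of_pos hp.r_pos]
      exact (mul_le_of_le_one_left (abs_nonneg _) hp.r_lt_one.le).trans (abs_sin_sub_sin_le _ _)
    calc |w r p - w r p'| = |r * (sin p.1 - sin p'.1) + (p.2 - p'.2)| := by unfold w; ring_nf
      _ ≤ |p.1 - p'.1| + |p.2 - p'.2| := (abs_add_le _ _).trans (by gcongr)
      _ ≤ 2 * dist p p' := by linarith [abs_fst_sub_le_dist p p', abs_snd_sub_le_dist p p']
  have hpow := abs_rpow_sub_rpow_le hδ.le ⟨(hp.w_pos hY.1).le, hp.w_le_three hY.2⟩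
    ⟨(hp.w_pos hY'.1).le, hp.w_le_three hY'.2⟩
  rw [q, q, ← mul_sub, abs_mul, abs_of_pos (by positivity)]
  calc A ^ (δ - 1) * |w r p ^ δ - w r p' ^ δ|
      ≤ A ^ (δ - 1) * (δ * 3 ^ (δ - 1) * (2 * dist p p')) := by
        gcongr
        exact hpow.trans (by gcongr)
    _ = qLipschitz δ A * dist p p' := by unfold qLipschitz; ring

lemma w_eq_of_q_eq {p p' : ℝ × ℝ} (hY : 0 ≤ p.2) (hY' : 0 ≤ p'.2)
    (h : q δ A r p = q δ A r p') : w r p = w r p' := by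
  rw [q, q, mul_right_inj' (rpow_pos_of_pos hp.A_pos _).ne'] at h
  exact (rpow_left_inj (hp.w_pos hY).le (hp.w_pos hY').le (by linarith [hp.one_lt_δ])).1 h

lemma climb_g : g K A r (regionLo K, 0) + (regionHi K - regionLo K) + 4 * π
    + logLipschitz K * yMax δ A ≤ g K A r (regionHi K, 0) := by
  have hlo : sin (regionLo K) = cos (margin K) := by
    rw [regionLo, add_comm, sin_add_pi_div_two]
  have hhi : sin (regionHi K) = -cos (margin K) := by
    rw [regionHi, show 3 * π / 2 - margin K = π - margin K + π / 2 by ring, sin_add_pi_div_two,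
      cos_pi_sub]
  have := climb hp.K_pos hp.criticalRatio_lt hp.r_lt_one hp.small.logLipschitz_mul_yMax_le
  simp only [g, w, hlo, hhi, add_zero, mul_neg, ← sub_eq_add_neg]
  linarith

lemma mem_Icc_g_of_window {a b : ℝ} {m : ℤ} (hb : b ∈ Icc (regionLo K) (regionHi K))
    (hga : g K A r (a, 0) = regionLo K + 2 * π * m)
    (hgb : g K A r (b, 0) = regionHi K + 2 * π * m + logLipschitz K * yMax δ A)
    {t Y : ℝ} (ht : t ∈ Icc (regionLo K) (regionHi K)) (hY : Y ∈ Icc 0 (yMax δ A)) :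
    t + 2 * π * m ∈ Icc (g K A r (a, Y)) (g K A r (b, Y)) := by
  have hdecr : g K A r (a, Y) ≤ g K A r (a, 0) := by
    have := log_le_log (hp.w_pos (p := (a, 0)) le_rfl) (by unfold w; linarith [hY.1] :
      w r (a, 0) ≤ w r (a, Y))
    unfold g; nlinarith [hp.K_pos]
  have hlip := hp.abs_g_sub_le hb hY.1 le_rfl
  rw [sub_zero, abs_of_nonneg hY.1] at hlip
  have := mul_le_mul_of_nonneg_left hY.2 (logLipschitz_pos hp.K_pos).le
  constructor <;> linarith [ht.1, ht.2, (abs_le.1 hlip).1]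

lemma contraction_lt_one :
    (1 + expansion K)⁻¹ * (1 + logLipschitz K * qLipschitz δ A) < 1 := by
  have := expansion_pos hp.K_pos
  rw [inv_mul_lt_one₀ (by linarith)]
  linarith [hp.small.logLipschitz_mul_qLipschitz_lt]

lemma exists_conleyMoserData :
    ∃ H : ConleyMoserData, H.g = g K A r ∧ H.q = q δ A r ∧ H.ε ≤ 1 := by
  have hK := hp.K_pos
  have hε₁ := hp.small.yMax_le_one
  have hY₁ {Y : ℝ} (hY : Y ∈ Icc 0 (yMax δ A)) : Y ∈ Icc 0 1 := ⟨hY.1, hY.2.trans hε₁⟩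
  obtain ⟨a, b, j, hj, hab, hgab⟩ :=
    exists_windows_of_climb (mul_nonneg (logLipschitz_pos hK).le hp.yMax_nonneg)
      regionLo_le_regionHi (hp.continuousOn_g.comp (Continuous.prodMk_left 0).continuousOn
        fun _ _ => le_refl (0 : ℝ)) hp.climb_g
  set β := (1 + expansion K)⁻¹
  set κ := qLipschitz δ A
  have hκ : 0 ≤ κ := by
    have := hp.A_pos; have := hp.one_lt_δ; unfold κ qLipschitz; positivity
  refine ⟨{
    lo := regionLo K, hi := regionHi K, ε := yMax δ A, a := a, b := b, j := j,
    g := g K A r, q := q δ A r, β := β, P := logLipschitz K, κ := κ,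
    γ := max κ (β * (1 + logLipschitz K * κ))
    hi_sub_lo_lt := by unfold regionLo regionHi; linarith [margin_pos hK, pi_pos]
    ε_nonneg := hp.yMax_nonneg
    lo_le_a := fun i => (hab i).1
    a_le_b := fun i => (hab i).2.1
    b_le_hi := fun i => (hab i).2.2
    j_injective := hj
    covers := fun i t ht Y hY => hp.mem_Icc_g_of_window
      ⟨(hab i).1.trans (hab i).2.1, (hab i).2.2⟩ (hgab i).1 (hgab i).2 ht hY
    continuousOn_g := hp.continuousOn_g.mono fun p hp' => hp'.2.1
    abs_sub_le_g := fun Y hY θ hθ θ' hθ' => hp.abs_sub_le_g (hY₁ hY) hθ hθ'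
    abs_g_sub_le := fun θ hθ Y hY Y' hY' => hp.abs_g_sub_le hθ hY.1 hY'.1
    mapsTo_q := fun p hp' => hp.q_mem_Icc (hY₁ hp'.2)
    abs_q_sub_le := fun p hp' p' hp'' => hp.abs_q_sub_le (hY₁ hp'.2) (hY₁ hp''.2)
    g_sub_eq_of_q_eq := fun p hp' p' hp'' h => by
      simp only [g, hp.w_eq_of_q_eq hp'.2.1 hp''.2.1 h]; ring
    snd_eq_of_q_eq := fun θ _ Y hY Y' hY' h => by
      have := hp.w_eq_of_q_eq (p := (θ, Y)) (p' := (θ, Y')) hY.1 hY'.1 h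
      simpa [w] using this
    β_nonneg := inv_nonneg.2 (by linarith [expansion_pos hK])
    P_nonneg := (logLipschitz_pos hK).le
    κ_nonneg := hκ
    κ_le_γ := le_max_left _ _
    β_mul_le_γ := le_max_right _ _
    γ_lt_one := max_lt hp.small.qLipschitz_lt_one hp.contraction_lt_one }, rfl, rfl, hε₁⟩

end Params

/-- The return map on the universal cover, for fixed `y`. Where `y + A + λ sin x ≤ 0` it
takes Lean's junk values of `log` and `rpow`; only the region `y + A + λ sin x > 0` matters. -/
def liftedMap (δ K A lam y x : ℝ) : AddCircle (2 * π) × ℝ :=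
  ((x - K * log (y + A + lam * sin x) : ℝ), (y + A + lam * sin x) ^ δ)

lemma periodic_liftedMap (δ K A lam y : ℝ) : Periodic (liftedMap δ K A lam y) (2 * π) := by
  intro x
  simp only [liftedMap, sin_add_two_pi, add_sub_right_comm x (2 * π), AddCircle.coe_add_period]

def cylinderMap (δ K A lam : ℝ) (p : AddCircle (2 * π) × ℝ) : AddCircle (2 * π) × ℝ :=
  (periodic_liftedMap δ K A lam p.2).lift p.1

lemma cylinderMap_coe (δ K A lam x y : ℝ) :
    cylinderMap δ K A lam (x, y) =
      (↑(x - K * log (y + A + lam * sin x)), (y + A + lam * sin x) ^ δ) :=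
  Periodic.lift_coe _ _

lemma add_add_mul_sin_pos {A lam x y : ℝ} (hy : 0 ≤ y) (hlam : 0 ≤ lam) (hlamA : lam < A) :
    0 < y + A + lam * sin x := by
  nlinarith [neg_one_le_sin x]

lemma cylinderMap_coe_mul {δ K A r : ℝ} (hp : Params δ K A r) {p : ℝ × ℝ} (hY : 0 ≤ p.2) :
    cylinderMap δ K A (r * A) (p.1, A * p.2) = (↑(g K A r p), A * q δ A r p) := by
  have hA := hp.A_pos
  have hw := hp.w_pos hY
  have hAw : A * p.2 + A + r * A * sin p.1 = A * w r p := by unfold w; ring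
  rw [cylinderMap_coe, hAw, log_mul hA.ne' hw.ne', mul_rpow hA.le hw.le, q, ← mul_assoc,
    ← rpow_one_add' hA.le (by linarith [hp.one_lt_δ]), add_sub_cancel, g]
  congr 2
  ring

lemma Params.exists_semiconj {δ K A r : ℝ} (hp : Params δ K A r) :
    ∃ Ψ : (ℤ → Bool) → AddCircle (2 * π) × ℝ, Continuous Ψ ∧ Injective Ψ ∧
      Semiconj Ψ (fun s n => s (n + 1)) (cylinderMap δ K A (r * A)) ∧
      ∀ s, (Ψ s).2 ∈ Icc 0 A := by
  obtain ⟨H, hg, hq, hε⟩ := hp.exists_conleyMoserData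
  have hA := hp.A_pos
  refine ⟨fun s => ((H.codedPoint s).1, A * (H.codedPoint s).2), ?_, fun s s' h => ?_,
    fun s => ?_, fun s => ?_⟩
  · exact ((AddCircle.continuous_mk' _).comp (continuous_fst.comp H.continuous_codedPoint)).prodMk
      (continuous_const.mul (continuous_snd.comp H.continuous_codedPoint))
  · simp only [Prod.mk.injEq, mul_right_inj' hA.ne'] at h
    exact H.injective_coe_codedPoint (Prod.ext h.1 h.2)
  · rw [cylinderMap_coe_mul hp (H.codedPoint_mem_strip s).2.1, ← hg, ← hq,
      H.coe_g_codedPoint, H.q_codedPoint]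
  · have hY := (H.codedPoint_mem_strip s).2
    exact ⟨mul_nonneg hA.le hY.1, mul_le_of_le_one_right hA.le (hY.2.trans hε)⟩

lemma exists_isSmall {δ K : ℝ} (hδ : 1 < δ) (hK : 0 < K) :
    ∃ A₀ ∈ Ioo (0 : ℝ) 1, ∀ A ∈ Ioo 0 A₀, IsSmall δ K A := by
  have hpow : Tendsto (fun A : ℝ => A ^ (δ - 1)) (𝓝[>] 0) (𝓝 0) := by
    have := (continuousAt_rpow_const 0 (δ - 1) (Or.inr (by linarith))).tendsto
    rw [zero_rpow (by linarith)] at this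
    exact this.mono_left nhdsWithin_le_nhds
  have hy : Tendsto (fun A => yMax δ A) (𝓝[>] 0) (𝓝 0) := by
    simpa [yMax] using hpow.const_mul (3 ^ δ)
  have hq : Tendsto (fun A => qLipschitz δ A) (𝓝[>] 0) (𝓝 0) := by
    simpa [qLipschitz] using hpow.const_mul (2 * δ * 3 ^ (δ - 1))
  have hP (f : ℝ → ℝ) (hf : Tendsto f (𝓝[>] 0) (𝓝 0)) :
      Tendsto (fun A => logLipschitz K * f A) (𝓝[>] 0) (𝓝 0) := by
    simpa using hf.const_mul (logLipschitz K)
  have hsmall : ∀ᶠ A in 𝓝[>] 0, IsSmall δ K A := by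
    filter_upwards [hy.eventually (ge_mem_nhds one_pos),
      (hP _ hy).eventually (ge_mem_nhds (lt_min one_pos
        (by have := log_one_add_criticalRatio_pos hK; positivity :
          0 < K * log (1 + criticalRatio K) / 2))),
      hq.eventually (gt_mem_nhds one_pos), (hP _ hq).eventually (gt_mem_nhds (expansion_pos hK))]
      with A h₁ h₂ h₃ h₄
    exact ⟨h₁, h₂, h₃, h₄⟩
  obtain ⟨u, hu, hsub⟩ := mem_nhdsGT_iff_exists_Ioo_subset.1 hsmall
  exact ⟨min u (1 / 2), ⟨lt_min hu (by norm_num), (min_le_right _ _).trans_lt (by norm_num)⟩,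
    fun A hA => hsub ⟨hA.1, hA.2.trans_le (min_le_left _ _)⟩⟩

end ReturnMap

end

/-- Theorem E: for `f(K)·A < λ < A` with `A` small, the map induced on the
cylinder `(ℝ/2πℤ) × ℝ` by the model first return map has a nonempty compact
invariant set on which it is topologically conjugate to the full Bernoulli
shift on two symbols. -/
theorem stmt_14 (δ K : ℝ) (hδ : 1 < δ) (hK : 0 < K) :
    ∃ A₀ ∈ Set.Ioo (0 : ℝ) 1, ∀ A ∈ Set.Ioo (0 : ℝ) A₀, ∀ lam : ℝ,
      (Real.exp (4 * π / K) - 1) / (Real.exp (4 * π / K) - 1 / 4) * A < lam →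
      lam < A →
      ∃ Fbar : AddCircle (2 * π) × ℝ → AddCircle (2 * π) × ℝ,
        (∀ x y : ℝ, 0 < y + A + lam * Real.sin x →
          Fbar (↑x, y) =
            (↑(x - K * Real.log (y + A + lam * Real.sin x)),
             (y + A + lam * Real.sin x) ^ δ)) ∧
        ∃ Λ : Set (AddCircle (2 * π) × ℝ), Λ.Nonempty ∧ IsCompact Λ ∧
          (∀ p ∈ Λ, p.2 ∈ Set.Icc (0 : ℝ) A ∧
            ∀ x : ℝ, (↑x : AddCircle (2 * π)) = p.1 →
              0 < p.2 + A + lam * Real.sin x) ∧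
          Fbar '' Λ = Λ ∧
          ∃ e : Λ ≃ₜ (ℤ → Bool),
            ∀ p q : Λ, (q : AddCircle (2 * π) × ℝ) = Fbar ↑p →
              (e q : ℤ → Bool) = fun n => e p (n + 1) := by
  obtain ⟨A₀, hA₀, hsmall⟩ := ReturnMap.exists_isSmall hδ hK
  refine ⟨A₀, hA₀, fun A hA lam hlo hhi => ?_⟩
  have hp : ReturnMap.Params δ K A (lam / A) :=
    ⟨hδ, hK, hA.1, (lt_div_iff₀ hA.1).2 hlo, (div_lt_one hA.1).2 hhi, hsmall A hA⟩
  have hlam : 0 ≤ lam := ((div_pos_iff_of_pos_right hA.1).1 hp.r_pos).le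
  obtain ⟨Ψ, hcont, hinj, hΨ, hmem⟩ := hp.exists_semiconj
  rw [div_mul_cancel₀ lam hA.1.ne'] at hΨ
  obtain ⟨hcpt, himage, e, he⟩ := exists_homeomorph_conj_of_semiconj
    (fun s => ⟨fun n => s (n - 1), by simp⟩) hcont hinj hΨ
  refine ⟨ReturnMap.cylinderMap δ K A lam, fun x y _ => ReturnMap.cylinderMap_coe .., range Ψ,
    range_nonempty Ψ, hcpt, ?_, himage, e, he⟩
  rintro _ ⟨s, rfl⟩
  exact ⟨hmem s, fun x _ => ReturnMap.add_add_mul_sin_pos (hmem s).1 hlam hhi⟩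
end

section
/- Let a > 0 and μ₂ ∈ ℝ, and define G : ℝ² → ℝ by G(r,z) = (a/2)·r^{2/a}·(μ₂ − r²/(1+a) − z²) (real power of r). Then for every r > 0 and z ∈ ℝ, the Lie derivative of G along the vector field v(r,z) = (a·r·z, μ₂ − r² − z²) vanishes: (∂G/∂r)(r,z)·(a·r·z) + (∂G/∂z)(r,z)·(μ₂ − r² − z²) = 0. -/
open Real

/-- `G(r,z) = (a/2) r^{2/a} (μ₂ - r²/(1+a) - z²)` is a first integral of the
truncated normal form `ṙ = a r z, ż = μ₂ - r² - z²` on the half-plane `r > 0`: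
its Lie derivative along the vector field vanishes. -/
theorem stmt_15 (a μ₂ : ℝ) (ha : 0 < a) :
    ∀ r z : ℝ, 0 < r →
      deriv (fun s : ℝ => (a / 2) * s ^ (2 / a) * (μ₂ - s ^ 2 / (1 + a) - z ^ 2)) r
          * (a * r * z) +
        deriv (fun t : ℝ => (a / 2) * r ^ (2 / a) * (μ₂ - r ^ 2 / (1 + a) - t ^ 2)) z
          * (μ₂ - r ^ 2 - z ^ 2) = 0 := by
  intro r z hr
  have h1 : HasDerivAt (fun s : ℝ => (a / 2) * s ^ (2 / a) * (μ₂ - s ^ 2 / (1 + a) - z ^ 2))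
      ((a / 2) * ((2 / a) * r ^ (2 / a - 1)) * (μ₂ - r ^ 2 / (1 + a) - z ^ 2)
        + (a / 2) * r ^ (2 / a) * (0 - (2 * r ^ 1) / (1 + a) - 0)) r := by
    have hp : HasDerivAt (fun s : ℝ => (a / 2) * s ^ (2 / a))
        ((a / 2) * ((2 / a) * r ^ (2 / a - 1))) r :=
      (Real.hasDerivAt_rpow_const (Or.inl hr.ne')).const_mul _
    have hq : HasDerivAt (fun s : ℝ => μ₂ - s ^ 2 / (1 + a) - z ^ 2)
        (0 - (2 * r ^ 1) / (1 + a) - 0) r := by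
      exact (((hasDerivAt_const r μ₂).sub
        (((hasDerivAt_pow 2 r).div_const (1 + a)))).sub (hasDerivAt_const r (z ^ 2)))
    exact hp.mul hq
  have h2 : HasDerivAt (fun t : ℝ => (a / 2) * r ^ (2 / a) * (μ₂ - r ^ 2 / (1 + a) - t ^ 2))
      ((a / 2) * r ^ (2 / a) * (0 - 2 * z ^ 1)) z := by
    have : HasDerivAt (fun t : ℝ => μ₂ - r ^ 2 / (1 + a) - t ^ 2) (0 - 2 * z ^ 1) z :=
      (hasDerivAt_const z (μ₂ - r ^ 2 / (1 + a))).sub (hasDerivAt_pow 2 z)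
    simpa using this.const_mul ((a / 2) * r ^ (2 / a))
  rw [h1.deriv, h2.deriv]
  have hsub : r ^ (2 / a - 1) = r ^ (2 / a) * r⁻¹ := by
    rw [Real.rpow_sub hr, Real.rpow_one, div_eq_mul_inv]
  rw [hsub]
  have h1a : (1 : ℝ) + a ≠ 0 := by positivity
  field_simp
  ring
end
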